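/- Under the standing assumptions, setting u := f(U_{C*}) and C** := C* ∪ {u}, the set C** is a chain of P, u is the maximum element of C**, and C** ⊄ C* (indeed u ∉ C*). -/

import Mathlib

/-- The set of strict upper bounds of a chain `C`. -/
def U {P : Type*} [PartialOrder P] (C : Set P) : Set P := {x | ∀ y ∈ C, y < x}

/-- `𝒞₀` : the set of all chains `C` of `P` satisfying condition (i-C):
for every `S ⊆ C` with `U S ⊈ U C`, one has `f (U S) ∈ C`. -/
def Cfam0 {P : Type*} [PartialOrder P] (f : Set P → P) : Set (Set P) :=
  {C | IsChain (· ≤ ·) C ∧ ∀ S ⊆ C, ¬ U S ⊆ U C → f (U S) ∈ C}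

/-- `𝒞` : the set of all `C ∈ 𝒞₀` satisfying condition (ii-C):
for every `C' ∈ 𝒞₀`, one has `C \ C' ⊆ U C'`. -/
def Cfam {P : Type*} [PartialOrder P] (f : Set P → P) : Set (Set P) :=
  {C | C ∈ Cfam0 f ∧ ∀ C' ∈ Cfam0 f, C \ C' ⊆ U C'}

section StrictUpperBounds

variable {P : Type*} [PartialOrder P] {C : Set P} {u : P}

lemma notMem_of_mem_U (hu : u ∈ U C) : u ∉ C :=
  fun h => lt_irrefl u (hu u h)

lemma isGreatest_union_singleton_of_mem_U (hu : u ∈ U C) : IsGreatest (C ∪ {u}) u := by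
  refine ⟨Or.inr rfl, ?_⟩
  rintro y (hy | rfl)
  · exact (hu y hy).le
  · exact le_rfl

lemma IsChain.union_singleton_of_mem_U (hC : IsChain (· ≤ ·) C) (hu : u ∈ U C) :
    IsChain (· ≤ ·) (C ∪ {u}) := by
  rw [Set.union_singleton]
  exact hC.insert fun y hy _ => Or.inr (hu y hy).le

end StrictUpperBounds

/-- Condition (ii) places every point of `C \ C'` strictly above all of `C'`, so points of two
members of `𝒞` are always comparable. -/
lemma isChain_sUnion_Cfam {P : Type*} [PartialOrder P] (f : Set P → P) :
    IsChain (· ≤ ·) (⋃₀ Cfam f) := by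
  rintro x ⟨C, hC, hxC⟩ y ⟨C', hC', hyC'⟩ hne
  by_cases hxC' : x ∈ C'
  · exact hC'.1.1 hxC' hyC' hne
  · exact Or.inr (hC.2 C' hC'.1 ⟨hxC, hxC'⟩ y hyC').le

theorem stmt_9_general {P : Type*} [PartialOrder P]
    (f : Set P → P) (hf : ∀ C : Set P, IsChain (· ≤ ·) C → f (U C) ∈ U C) :
    IsChain (· ≤ ·) (⋃₀ Cfam f ∪ {f (U (⋃₀ Cfam f))}) ∧
      IsGreatest (⋃₀ Cfam f ∪ {f (U (⋃₀ Cfam f))}) (f (U (⋃₀ Cfam f))) ∧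
      f (U (⋃₀ Cfam f)) ∉ ⋃₀ Cfam f ∧
      ¬ ⋃₀ Cfam f ∪ {f (U (⋃₀ Cfam f))} ⊆ ⋃₀ Cfam f := by
  have hchain := isChain_sUnion_Cfam f
  have hu := hf _ hchain
  have hnot := notMem_of_mem_U hu
  exact ⟨hchain.union_singleton_of_mem_U hu, isGreatest_union_singleton_of_mem_U hu, hnot,
    fun h => hnot (h (Or.inr rfl))⟩

/-- With `u := f (U C*)` and `C** := C* ∪ {u}`, the set `C**` is a chain of `P`,
`u` is the maximum element of `C**`, and `u ∉ C*` (so `C** ⊄ C*`). -/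
theorem stmt_9 {P : Type*} [PartialOrder P] [Nonempty P]
    (hub : ∀ C : Set P, IsChain (· ≤ ·) C → ∃ x : P, ∀ y ∈ C, y ≤ x)
    (hnomax : ∀ m : P, ∃ x : P, m < x)
    (f : Set P → P) (hf : ∀ C : Set P, IsChain (· ≤ ·) C → f (U C) ∈ U C) :
    IsChain (· ≤ ·) (⋃₀ Cfam f ∪ {f (U (⋃₀ Cfam f))}) ∧
      IsGreatest (⋃₀ Cfam f ∪ {f (U (⋃₀ Cfam f))}) (f (U (⋃₀ Cfam f))) ∧
      f (U (⋃₀ Cfam f)) ∉ ⋃₀ Cfam f ∧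
      ¬ ⋃₀ Cfam f ∪ {f (U (⋃₀ Cfam f))} ⊆ ⋃₀ Cfam f :=
  stmt_9_general f hf
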